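/- For the rack (ℤ, +1) (the free monogenic rack among permutation racks), HR_0 ≅ ℤ, HR_1 ≅ ℤ, and HR_n = 0 for n ≥ 2. -/

import Mathlib

/-- Rack chains: free abelian group on `n`-tuples. -/
abbrev CR (X : Type) (n : ℕ) : Type := (Fin n → X) →₀ ℤ

/-- The monomial basis element. -/
noncomputable def mon {X : Type} {n : ℕ} (w : Fin n → X) : CR X n := Finsupp.single w 1

/-- Delete the `(i+1)`-st entry (1-indexed `k = i+1`). -/
def del {X : Type} {n : ℕ} (w : Fin (n+1) → X) (i : Fin n) : Fin n → X :=
  fun j => if (j : ℕ) < (i : ℕ) then w j.castSucc else w j.succ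

/-- Delete the `(i+1)`-st entry and act with it on all later entries. -/
def act {X : Type} (op : X → X → X) {n : ℕ} (w : Fin (n+1) → X) (i : Fin n) : Fin n → X :=
  fun j => if (j : ℕ) < (i : ℕ) then w j.castSucc else op (w i.castSucc) (w j.succ)

/-- Rack differential on a monomial. -/
noncomputable def dMon {X : Type} (op : X → X → X) {n : ℕ} (w : Fin (n+1) → X) : CR X n :=
  ∑ i : Fin n, ((-1 : ℤ) ^ (i : ℕ)) • (mon (del w i) - mon (act op w i))

/-- The rack differential `CR_{n+1} → CR_n`. -/
noncomputable def d {X : Type} (op : X → X → X) (n : ℕ) : CR X (n+1) →+ CR X n :=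
  Finsupp.liftAddHom fun w => zmultiplesHom _ (dMon op w)

/-- Left concatenation `w ↦ x·w`. -/
noncomputable def consHom {X : Type} (x : X) (n : ℕ) : CR X n →+ CR X (n+1) :=
  Finsupp.liftAddHom fun w => zmultiplesHom _ (mon (Fin.cons x w))

/-- Diagonal action of a map `φ` on chains. -/
noncomputable def mapChains {X : Type} (φ : X → X) (n : ℕ) : CR X n →+ CR X n :=
  Finsupp.liftAddHom fun w => zmultiplesHom _ (mon (φ ∘ w))

/-- Cycles. -/
noncomputable def ZC {X : Type} (op : X → X → X) : (n : ℕ) → AddSubgroup (CR X n)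
  | 0 => ⊤
  | (m+1) => (d op m).ker

/-- Boundaries. -/
noncomputable def BC {X : Type} (op : X → X → X) (n : ℕ) : AddSubgroup (CR X n) :=
  (d op n).range

/-- Rack homology. -/
abbrev HR (X : Type) (op : X → X → X) (n : ℕ) : Type :=
  ZC op n ⧸ ((BC op n).addSubgroupOf (ZC op n))

/-- The rack operation of a permutation rack. -/
def permOp {X : Type} (φ : X ≃ X) : X → X → X := fun _ y => φ y

/-- Multiplication by an element of `ℤX`. -/
noncomputable def mulChain {X : Type} (v : X →₀ ℤ) (n : ℕ) : CR X n →+ CR X (n+1) :=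
  ∑ x ∈ v.support, v x • consHom x n

/-- The rack operation of `(ℤ, +1)`. -/
def addOneOp : ℤ → ℤ → ℤ := fun _ y => y + 1

/-! Write `x·c` for `consHom x c`, `T` for `mapChains φ` and `t` for `shiftLast φ`, which applies
`φ` to the last letter only. In a permutation rack `d (x·w) = w - T w - x·(d w)`, so `x·-` is a
chain homotopy from `1` to `T`; and `P = dupHomotopy`, with `P (x·v) = x·x·v - x·(P v)`, is one
from `t` to `T` in degrees `≥ 2`. Hence `(1 - t) y` is a boundary for every cycle `y` of degree `≥ 2`.

For `(ℤ, +1)` the map `1 - t` is injective, and its image is the kernel of deleting the last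
letter, which is a chain map split by appending `0`. If that deletion sends a cycle `z` to a
boundary `d u`, then `z - d (snoc u 0)` is `(1 - t) y`, where `y` is a cycle by injectivity; so
`z` is a boundary. By induction every cycle of degree `≥ 2` bounds, the start in degree 2 being
that cycles there have augmentation `0` (detected by `coordSum`). In degree 1,
`d (x·y) = y - (y + 1)`, so the boundaries are exactly the chains of augmentation `0`. -/

variable {X : Type}

section Chains

noncomputable def liftMon {Y : Type} {n m : ℕ} (f : (Fin n → X) → CR Y m) : CR X n →+ CR Y m :=
  Finsupp.liftAddHom fun w => zmultiplesHom _ (f w)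

noncomputable def mapMon {n m : ℕ} (f : (Fin n → X) → Fin m → X) : CR X n →+ CR X m :=
  Finsupp.mapDomain.addMonoidHom f

noncomputable def aug (n : ℕ) : CR X n →+ ℤ :=
  Finsupp.liftAddHom fun _ => AddMonoidHom.id ℤ

variable {n : ℕ}

theorem single_eq_zsmul_mon (w : Fin n → X) (k : ℤ) : Finsupp.single w k = k • mon w := by
  simp [mon]

@[simp] theorem liftMon_mon {Y : Type} {m : ℕ} (f : (Fin n → X) → CR Y m) (w : Fin n → X) :
    liftMon f (mon w) = f w := by
  simp [liftMon, mon]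

@[simp] theorem mapMon_mon {m : ℕ} (f : (Fin n → X) → Fin m → X) (w : Fin n → X) :
    mapMon f (mon w) = mon (f w) := by
  simp [mapMon, mon]

@[simp] theorem aug_mon (w : Fin n → X) : aug n (mon w) = 1 := by
  simp [aug, mon]

theorem d_mon (op : X → X → X) (w : Fin (n+1) → X) : d op n (mon w) = dMon op w := by
  simp [d, mon]

@[simp] theorem consHom_mon (x : X) (w : Fin n → X) :
    consHom x n (mon w) = mon (Fin.cons x w) := by
  simp [consHom, mon]

@[simp] theorem mapChains_mon (ψ : X → X) (w : Fin n → X) :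
    mapChains ψ n (mon w) = mon (ψ ∘ w) := by
  simp [mapChains, mon]

theorem hom_ext_mon {M : Type*} [AddCommGroup M] {f g : CR X n →+ M}
    (h : ∀ w, f (mon w) = g (mon w)) : f = g :=
  Finsupp.addHom_ext fun w k => by rw [single_eq_zsmul_mon, map_zsmul, map_zsmul, h]

theorem apply_eq_of_mon {M : Type*} [AddCommGroup M] {f g : CR X n →+ M}
    (h : ∀ w, f (mon w) = g (mon w)) (c : CR X n) : f c = g c :=
  DFunLike.congr_fun (hom_ext_mon h) c

theorem apply_eq_of_mon_cons {M : Type*} [AddCommGroup M] {f g : CR X (n+1) →+ M}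
    (h : ∀ x v, f (mon (Fin.cons x v)) = g (mon (Fin.cons x v))) (c : CR X (n+1)) : f c = g c :=
  apply_eq_of_mon (fun w => Fin.cons_self_tail w ▸ h (w 0) (Fin.tail w)) c

theorem range_le_of_mon {M : Type*} [AddCommGroup M] {f : CR X n →+ M} {H : AddSubgroup M}
    (h : ∀ w, f (mon w) ∈ H) : f.range ≤ H := by
  rintro _ ⟨c, rfl⟩
  induction c using Finsupp.induction_linear with
  | zero => simp
  | add a b ha hb => simpa using H.add_mem ha hb
  | single w k => simpa [single_eq_zsmul_mon] using H.zsmul_mem (h w) k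

theorem d_zero (op : X → X → X) : d op 0 = 0 :=
  hom_ext_mon fun w => by simp [d_mon, dMon]

theorem aug_d (op : X → X → X) (c : CR X (n+1)) : aug n (d op n c) = 0 :=
  apply_eq_of_mon (f := (aug n).comp (d op n)) (g := 0) (fun w => by simp [d_mon, dMon]) c

theorem aug_zero_injective : Function.Injective (aug (X := X) 0) := by
  have : aug (X := X) 0 = (Finsupp.uniqueAddEquiv Fin.elim0 : CR X 0 ≃+ ℤ).toAddMonoidHom := by
    refine hom_ext_mon fun w => ?_
    rw [aug_mon, Subsingleton.elim w Fin.elim0]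
    simp [mon]
  rw [this]
  exact (Finsupp.uniqueAddEquiv _).injective

end Chains

section Tuples

variable {n : ℕ}

theorem del_cons_zero (x : X) (w : Fin (n+1) → X) : del (Fin.cons x w) 0 = w := by
  funext j
  simp [del]

theorem act_permOp_cons_zero (φ : X ≃ X) (x : X) (w : Fin (n+1) → X) :
    act (permOp φ) (Fin.cons x w) 0 = φ ∘ w := by
  funext j
  simp [act, permOp]

theorem del_cons_succ (x : X) (w : Fin (n+1) → X) (i : Fin n) :
    del (Fin.cons x w) i.succ = Fin.cons x (del w i) := by
  funext j
  cases j using Fin.cases with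
  | zero => simp [del]
  | succ j =>
    simp only [del, Fin.val_succ, Fin.cons_succ, add_lt_add_iff_right]
    split_ifs <;> simp

theorem act_cons_succ (op : X → X → X) (x : X) (w : Fin (n+1) → X) (i : Fin n) :
    act op (Fin.cons x w) i.succ = Fin.cons x (act op w i) := by
  funext j
  cases j using Fin.cases with
  | zero => simp [act]
  | succ j =>
    simp only [act, Fin.val_succ, Fin.cons_succ, add_lt_add_iff_right]
    split_ifs <;> simp

theorem Fin.init_cons (x : X) (w : Fin (n+1) → X) :
    Fin.init (Fin.cons x w : Fin (n+2) → X) = Fin.cons x (Fin.init w) := by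
  funext j
  cases j using Fin.cases with
  | zero => rfl
  | succ j => simp [Fin.init]

def mapLast (ψ : X → X) (w : Fin (n+1) → X) : Fin (n+1) → X :=
  Function.update w (Fin.last n) (ψ (w (Fin.last n)))

theorem mapLast_cons (ψ : X → X) (x : X) (w : Fin (n+1) → X) :
    mapLast ψ (Fin.cons x w) = Fin.cons x (mapLast ψ w) := by
  simp [mapLast, Fin.cons_update, ← Fin.succ_last]

theorem mapLast_fin_one (ψ : X → X) (w : Fin 1 → X) : mapLast ψ w = ψ ∘ w := by
  funext j
  obtain rfl := Fin.fin_one_eq_zero j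
  simp [mapLast]

theorem mapLast_comp (ψ : X → X) (w : Fin (n+1) → X) :
    mapLast ψ (ψ ∘ w) = ψ ∘ mapLast ψ w := by
  simp [mapLast, Function.comp_update]

theorem mapLast_snoc (ψ : X → X) (v : Fin n → X) (y : X) :
    mapLast ψ (Fin.snoc v y : Fin (n+1) → X) = Fin.snoc v (ψ y) := by
  simp [mapLast, Fin.update_snoc_last]

theorem mapLast_injective {ψ : X → X} (hψ : Function.Injective ψ) :
    Function.Injective (mapLast (n := n) ψ) := by
  intro a b h
  rw [← Fin.snoc_init_self a, ← Fin.snoc_init_self b, mapLast_snoc, mapLast_snoc,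
    Fin.snoc_inj] at h
  rw [← Fin.snoc_init_self a, ← Fin.snoc_init_self b, h.1, hψ h.2]

end Tuples

section ChainMaps

noncomputable def shiftLast (ψ : X → X) (n : ℕ) : CR X (n+1) →+ CR X (n+1) :=
  mapMon (mapLast ψ)

noncomputable def initHom (n : ℕ) : CR X (n+1) →+ CR X n := mapMon Fin.init

noncomputable def snocHom (x : X) (n : ℕ) : CR X n →+ CR X (n+1) := mapMon (Fin.snoc · x)

noncomputable def dupHomotopy : (n : ℕ) → CR X (n+1) →+ CR X (n+2)
  | 0 => 0
  | n+1 => liftMon fun w =>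
      mon (Fin.cons (w 0) w) - consHom (w 0) (n+2) (dupHomotopy n (mon (Fin.tail w)))

variable {n : ℕ}

@[simp] theorem shiftLast_mon (ψ : X → X) (w : Fin (n+1) → X) :
    shiftLast ψ n (mon w) = mon (mapLast ψ w) :=
  mapMon_mon _ _

@[simp] theorem initHom_mon (w : Fin (n+1) → X) : initHom n (mon w) = mon (Fin.init w) :=
  mapMon_mon _ _

@[simp] theorem snocHom_mon (x : X) (w : Fin n → X) :
    snocHom x n (mon w) = mon (Fin.snoc w x) :=
  mapMon_mon _ _

theorem dupHomotopy_mon_cons (x : X) (v : Fin (n+1) → X) :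
    dupHomotopy (n+1) (mon (Fin.cons x v)) =
      mon (Fin.cons x (Fin.cons x v)) - consHom x (n+2) (dupHomotopy n (mon v)) := by
  simp [dupHomotopy]

theorem shiftLast_zero (ψ : X → X) : shiftLast ψ 0 = mapChains ψ 1 :=
  hom_ext_mon fun w => by simp [mapLast_fin_one]

theorem mapChains_consHom (ψ : X → X) (x : X) (c : CR X n) :
    mapChains ψ (n+1) (consHom x n c) = consHom (ψ x) n (mapChains ψ n c) :=
  apply_eq_of_mon (f := (mapChains ψ (n+1)).comp (consHom x n))
    (g := (consHom (ψ x) n).comp (mapChains ψ n)) (fun w => by simp [Fin.comp_cons]) c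

theorem shiftLast_consHom (ψ : X → X) (x : X) (c : CR X (n+1)) :
    shiftLast ψ (n+1) (consHom x (n+1) c) = consHom x (n+1) (shiftLast ψ n c) :=
  apply_eq_of_mon (f := (shiftLast ψ (n+1)).comp (consHom x (n+1)))
    (g := (consHom x (n+1)).comp (shiftLast ψ n)) (fun w => by simp [mapLast_cons]) c

theorem initHom_consHom (x : X) (c : CR X (n+1)) :
    initHom (n+1) (consHom x (n+1) c) = consHom x n (initHom n c) :=
  apply_eq_of_mon (f := (initHom (n+1)).comp (consHom x (n+1)))
    (g := (consHom x n).comp (initHom n)) (fun w => by simp [Fin.init_cons]) c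

theorem initHom_snocHom (x : X) (c : CR X n) : initHom n (snocHom x n c) = c := by
  simpa using apply_eq_of_mon (f := (initHom n).comp (snocHom x n)) (g := .id _)
    (fun w => by simp) c

theorem aug_initHom (c : CR X (n+1)) : aug n (initHom n c) = aug (n+1) c :=
  apply_eq_of_mon (f := (aug n).comp (initHom n)) (g := aug (n+1)) (fun w => by simp) c

theorem dupHomotopy_consHom (x : X) (c : CR X (n+1)) :
    dupHomotopy (n+1) (consHom x (n+1) c) =
      consHom x (n+2) (consHom x (n+1) c) - consHom x (n+2) (dupHomotopy n c) := by
  simpa using apply_eq_of_mon (f := (dupHomotopy (n+1)).comp (consHom x (n+1)))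
    (g := (consHom x (n+2)).comp (consHom x (n+1)) - (consHom x (n+2)).comp (dupHomotopy n))
    (fun w => by simp [dupHomotopy_mon_cons]) c

theorem dupHomotopy_mapChains (ψ : X → X) : ∀ (n : ℕ) (c : CR X (n+1)),
    dupHomotopy n (mapChains ψ (n+1) c) = mapChains ψ (n+2) (dupHomotopy n c)
  | 0, c => by simp [dupHomotopy]
  | n+1, c => by
    refine apply_eq_of_mon_cons (f := (dupHomotopy (n+1)).comp (mapChains ψ (n+2)))
      (g := (mapChains ψ (n+3)).comp (dupHomotopy (n+1))) (fun x v => ?_) c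
    simp only [AddMonoidHom.comp_apply, mapChains_mon, Fin.comp_cons, dupHomotopy_mon_cons,
      map_sub, mapChains_consHom]
    rw [← mapChains_mon ψ v, dupHomotopy_mapChains ψ n]

end ChainMaps

section PermutationRack

variable (φ : X ≃ X)

local notation "δ" => d (permOp φ)

theorem d_mon_cons {n : ℕ} (x : X) (w : Fin (n+1) → X) :
    δ (n+1) (mon (Fin.cons x w)) = mon w - mon (φ ∘ w) - consHom x n (δ n (mon w)) := by
  simp only [d_mon, dMon, Fin.sum_univ_succ, Fin.val_zero, pow_zero, one_smul, del_cons_zero,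
    act_permOp_cons_zero, del_cons_succ, act_cons_succ, Fin.val_succ, pow_succ, mul_neg_one,
    neg_smul, Finset.sum_neg_distrib, map_sum, map_zsmul, map_sub, consHom_mon]
  abel

theorem d_consHom {n : ℕ} (x : X) (c : CR X (n+1)) :
    δ (n+1) (consHom x (n+1) c) = c - mapChains φ (n+1) c - consHom x n (δ n c) := by
  simpa using apply_eq_of_mon (f := (δ (n+1)).comp (consHom x (n+1)))
    (g := .id _ - mapChains φ (n+1) - (consHom x n).comp (δ n))
    (fun w => by simp [d_mon_cons]) c

theorem d_mapChains : ∀ (n : ℕ) (c : CR X (n+1)),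
    δ n (mapChains φ (n+1) c) = mapChains φ n (δ n c)
  | 0, c => by simp [d_zero]
  | n+1, c => by
    refine apply_eq_of_mon_cons (f := (δ (n+1)).comp (mapChains φ (n+2)))
      (g := (mapChains φ (n+1)).comp (δ (n+1))) (fun x v => ?_) c
    simp only [AddMonoidHom.comp_apply, mapChains_mon, Fin.comp_cons, d_mon_cons, map_sub,
      mapChains_consHom, ← d_mapChains n]

theorem d_d : ∀ (n : ℕ) (c : CR X (n+2)), δ n (δ (n+1) c) = 0
  | 0, c => by simp [d_zero]
  | n+1, c => by
    refine apply_eq_of_mon_cons (f := (δ (n+1)).comp (δ (n+2))) (g := 0) (fun x v => ?_) c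
    simp only [AddMonoidHom.comp_apply, d_mon_cons, map_sub, d_consHom, d_d n, ← d_mapChains]
    simp

theorem d_shiftLast : ∀ (n : ℕ) (c : CR X (n+2)),
    δ (n+1) (shiftLast φ (n+1) c) = shiftLast φ n (δ (n+1) c)
  | 0, c =>
    apply_eq_of_mon_cons (f := (δ 1).comp (shiftLast φ 1)) (g := (shiftLast φ 0).comp (δ 1))
      (fun x v => by simp [mapLast_cons, d_mon_cons, d_zero, mapLast_fin_one]) c
  | n+1, c => by
    refine apply_eq_of_mon_cons (f := (δ (n+2)).comp (shiftLast φ (n+2)))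
      (g := (shiftLast φ (n+1)).comp (δ (n+2))) (fun x v => ?_) c
    simp only [AddMonoidHom.comp_apply, shiftLast_mon, mapLast_cons, d_mon_cons, map_sub,
      shiftLast_consHom, mapLast_comp, ← d_shiftLast n]

theorem d_initHom : ∀ (n : ℕ) (c : CR X (n+2)),
    initHom n (δ (n+1) c) = δ n (initHom (n+1) c)
  | 0, c =>
    apply_eq_of_mon_cons (f := (initHom 0).comp (δ 1)) (g := (δ 0).comp (initHom 1))
      (fun x v => by
        simp [d_mon_cons, d_zero, Subsingleton.elim (Fin.init v) (Fin.init (φ ∘ v))]) c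
  | n+1, c => by
    refine apply_eq_of_mon_cons (f := (initHom (n+1)).comp (δ (n+2)))
      (g := (δ (n+1)).comp (initHom (n+2))) (fun x v => ?_) c
    simp only [AddMonoidHom.comp_apply, initHom_mon, Fin.init_cons, d_mon_cons, map_sub,
      initHom_consHom, Fin.comp_init, d_initHom n]

theorem d_dupHomotopy : ∀ (n : ℕ) (c : CR X (n+2)),
    δ (n+2) (dupHomotopy (n+1) c) + dupHomotopy n (δ (n+1) c) =
      shiftLast φ (n+1) c - mapChains φ (n+2) c
  | 0, c => by
    simpa using apply_eq_of_mon_cons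
      (f := (δ 2).comp (dupHomotopy 1) + (dupHomotopy 0).comp (δ 1))
      (g := shiftLast φ 1 - mapChains φ 2) (fun x v => by
        simp [d_mon_cons, d_zero, mapLast_cons, mapLast_fin_one, dupHomotopy, Fin.comp_cons]) c
  | n+1, c => by
    have ih := d_dupHomotopy n
    simpa using apply_eq_of_mon_cons
      (f := (δ (n+3)).comp (dupHomotopy (n+2)) + (dupHomotopy (n+1)).comp (δ (n+2)))
      (g := shiftLast φ (n+2) - mapChains φ (n+3)) (fun x v => by
        simp only [AddMonoidHom.add_apply, AddMonoidHom.sub_apply, AddMonoidHom.comp_apply,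
          dupHomotopy_mon_cons, d_mon_cons, map_sub, d_consHom, dupHomotopy_consHom,
          shiftLast_mon, mapLast_cons, mapChains_mon, Fin.comp_cons]
        rw [← mapChains_mon φ v, dupHomotopy_mapChains, eq_sub_of_add_eq (ih (mon v))]
        simp only [map_sub, shiftLast_mon, consHom_mon]
        abel) c

theorem sub_shiftLast_zero_eq_d_consHom (x : X) (c : CR X 1) :
    c - shiftLast φ 0 c = δ 1 (consHom x 1 c) := by
  simp [d_consHom, d_zero, shiftLast_zero]

end PermutationRack

theorem AddSubgroup.sub_mem_of_forall_add_one_sub_mem {G : Type*} [AddGroup G]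
    (H : AddSubgroup G) (f : ℤ → G) (h : ∀ k, f (k+1) - f k ∈ H) (y : ℤ) : f y - f 0 ∈ H := by
  induction y using Int.induction_on with
  | zero => simp
  | succ k ih => simpa using H.add_mem (h k) ih
  | pred k ih =>
    have := H.add_mem (H.neg_mem (h (-k-1))) ih
    rwa [sub_add_cancel, neg_sub, sub_add_sub_cancel] at this

section IntRack

local notation "σ" => Equiv.addRight (1 : ℤ)

local notation "δ" => d (permOp σ)

variable {n : ℕ}

theorem eq_zero_of_shiftLast_eq {v : CR ℤ (n+1)} (hv : shiftLast σ n v = v) : v = 0 := by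
  by_contra hne
  obtain ⟨w, hw, hmax⟩ :=
    v.support.exists_max_image (· (Fin.last n)) (Finsupp.support_nonempty_iff.mpr hne)
  have hshift : mapLast σ w ∈ v.support := by
    rw [Finsupp.mem_support_iff, ← hv, shiftLast, mapMon, Finsupp.mapDomain.addMonoidHom_apply,
      Finsupp.mapDomain_apply (mapLast_injective (Equiv.addRight (1 : ℤ)).injective)]
    exact Finsupp.mem_support_iff.mp hw
  have := hmax _ hshift
  simp [mapLast] at this

theorem sub_snocHom_initHom_mem_range (c : CR ℤ (n+1)) :
    c - snocHom 0 n (initHom n c) ∈ (AddMonoidHom.id _ - shiftLast σ n).range := by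
  refine range_le_of_mon (f := .id _ - (snocHom 0 n).comp (initHom n)) (fun w => ?_) ⟨c, rfl⟩
  have key := AddSubgroup.sub_mem_of_forall_add_one_sub_mem
    (AddMonoidHom.id _ - shiftLast σ n).range (fun k => mon (Fin.snoc (Fin.init w) k))
    (fun k => AddMonoidHom.mem_range.mpr ⟨-mon (Fin.snoc (Fin.init w) k),
      by simp [mapLast_snoc, neg_add_eq_sub]⟩) (w (Fin.last n))
  simpa only [Fin.snoc_init_self, AddMonoidHom.sub_apply, AddMonoidHom.id_apply,
    AddMonoidHom.comp_apply, initHom_mon, snocHom_mon] using key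

theorem range_d_one_eq_ker_aug : (δ 1).range = (aug 1).ker := by
  refine le_antisymm ?_ fun c hc => ?_
  · rintro _ ⟨b, rfl⟩
    exact aug_d _ b
  · have hinit : initHom 0 c = 0 :=
      aug_zero_injective (by rw [aug_initHom, map_zero]; exact hc)
    obtain ⟨y, hy⟩ := sub_snocHom_initHom_mem_range c
    rw [hinit, map_zero, sub_zero] at hy
    exact ⟨consHom 0 1 y, by rw [← sub_shiftLast_zero_eq_d_consHom, ← hy]; rfl⟩

noncomputable def coordSum : CR ℤ 1 →+ ℤ :=
  Finsupp.liftAddHom fun w => zmultiplesHom ℤ (w 0)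

@[simp] theorem coordSum_mon (w : Fin 1 → ℤ) : coordSum (mon w) = w 0 := by
  simp [coordSum, mon]

theorem coordSum_d_one (c : CR ℤ 2) : coordSum (δ 1 c) = -aug 2 c := by
  simpa using apply_eq_of_mon_cons (f := coordSum.comp (δ 1)) (g := -aug 2)
    (fun x v => by simp [d_mon_cons, d_zero]) c

theorem mem_range_d_of_initHom_mem_range {z : CR ℤ (n+2)} (hz : δ (n+1) z = 0)
    (hinit : initHom (n+1) z ∈ (δ (n+1)).range) : z ∈ (δ (n+2)).range := by
  obtain ⟨u, hu⟩ := hinit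
  set z' := z - δ (n+2) (snocHom 0 (n+2) u)
  have hz'_cycle : δ (n+1) z' = 0 := by simp [z', hz, d_d]
  have hz'_init : initHom (n+1) z' = 0 := by simp [z', d_initHom, initHom_snocHom, hu]
  obtain ⟨y, hy⟩ : ∃ y, y - shiftLast σ (n+1) y = z' := by
    simpa [hz'_init] using sub_snocHom_initHom_mem_range z'
  have hy_cycle : δ (n+1) y = 0 := by
    refine eq_zero_of_shiftLast_eq ?_
    rw [← d_shiftLast, eq_comm, ← sub_eq_zero, ← map_sub, hy, hz'_cycle]
  have hz' : δ (n+2) (consHom 0 (n+2) y - dupHomotopy (n+1) y) = z' := by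
    rw [map_sub, d_consHom, eq_sub_of_add_eq (d_dupHomotopy σ n y), hy_cycle, ← hy]
    simp
  exact ⟨snocHom 0 (n+2) u + (consHom 0 (n+2) y - dupHomotopy (n+1) y), by simp [hz', z']⟩

theorem ker_d_le_range_d : ∀ n : ℕ, (δ (n+1)).ker ≤ (δ (n+2)).range
  | 0, z, hz => by
    refine mem_range_d_of_initHom_mem_range hz ?_
    rw [range_d_one_eq_ker_aug, AddMonoidHom.mem_ker, aug_initHom, ← neg_eq_zero,
      ← coordSum_d_one, AddMonoidHom.mem_ker.mp hz, map_zero]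
  | n+1, z, hz => by
    refine mem_range_d_of_initHom_mem_range hz (ker_d_le_range_d n ?_)
    rw [AddMonoidHom.mem_ker, ← d_initHom, AddMonoidHom.mem_ker.mp hz, map_zero]

end IntRack

noncomputable def HR.addEquivOfSurjective {op : X → X → X} {n : ℕ} {A : Type*}
    [AddCommGroup A] (f : CR X n →+ A) (hZ : ZC op n = ⊤) (hf : Function.Surjective f)
    (hker : f.ker = BC op n) : HR X op n ≃+ A :=
  (QuotientAddGroup.quotientAddEquivOfEq
      (by rw [← AddMonoidHom.comap_ker, AddSubgroup.comap_subtype, hker])).trans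
    (QuotientAddGroup.quotientKerEquivOfSurjective (f.comp (ZC op n).subtype) fun a =>
      let ⟨c, hc⟩ := hf a
      ⟨⟨c, hZ ▸ AddSubgroup.mem_top c⟩, hc⟩)

theorem HR.subsingleton_of_le {op : X → X → X} {n : ℕ} (h : ZC op n ≤ BC op n) :
    Subsingleton (HR X op n) := by
  rw [HR, AddSubgroup.addSubgroupOf_eq_top.mpr h]
  exact QuotientAddGroup.subsingleton_quotient_top

/-- For the rack `(ℤ, +1)`: `HR_0 ≅ ℤ`, `HR_1 ≅ ℤ`, and `HR_n = 0` for `n ≥ 2`. -/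
theorem monogenic_free_rack_homology :
    Nonempty (HR ℤ addOneOp 0 ≃+ ℤ) ∧ Nonempty (HR ℤ addOneOp 1 ≃+ ℤ) ∧
      ∀ n : ℕ, 2 ≤ n → Subsingleton (HR ℤ addOneOp n) := by
  have hop : addOneOp = permOp (Equiv.addRight 1) := rfl
  have hZ1 : ZC (permOp (Equiv.addRight (1 : ℤ))) 1 = ⊤ := by simp [ZC, d_zero]
  have hB0 : (Finsupp.uniqueAddEquiv Fin.elim0 : CR ℤ 0 ≃+ ℤ).toAddMonoidHom.ker =
      BC (permOp (Equiv.addRight 1)) 0 := by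
    simpa [BC, d_zero] using
      (AddMonoidHom.ker_eq_bot_iff _).mpr (Finsupp.uniqueAddEquiv (M := ℤ) Fin.elim0).injective
  rw [hop]
  refine ⟨⟨HR.addEquivOfSurjective _ rfl (Finsupp.uniqueAddEquiv _).surjective hB0⟩,
    ⟨HR.addEquivOfSurjective (aug 1) hZ1 (fun k => ⟨k • mon (fun _ => 0), by simp⟩)
      range_d_one_eq_ker_aug.symm⟩, fun n hn => ?_⟩
  obtain ⟨k, rfl⟩ := Nat.exists_eq_add_of_le' hn
  exact HR.subsingleton_of_le (ker_d_le_range_d k)
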